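/- Consider the Z-channel with input alphabet {0,1}, output alphabet {0,1}, W(ỹ|0) = q (crossover to the shared symbol) and W(ỹ|1) = 1, i.e., transition matrix [[1−q, q],[0,1]]. For any length-n error-free feedback code with two equiprobable messages, the erasure probability satisfies P_era ≥ q^{n/2}. Moreover, the non-feedback code that assigns message 1 to the 'always-ỹ' input and message 2 to the other input for the first ⌊n/2⌋ slots and swaps the assignment in the remaining slots achieves erasure probability at most q^{⌊n/2⌋}. -/

import Mathlib

/-!
An error-free code with two messages and lists of size one must erase every output sequence
that has positive likelihood under both messages, so by AM-GM its erasure probability is at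
least the Bhattacharyya sum `∑ y, √(P(y | 0) P(y | 1))`. With feedback this sum still factors
along the time steps, as a sum over the tree of output prefixes of products of per-step
coefficients `∑ b, √(W(b | x) W(b | x'))`; on the Z-channel each of these is at least `√q`
(it is `1` for equal inputs and `√q` for distinct ones), which gives `q ^ (n / 2)`. Looking at
the all-`ỹ` output alone would not do: a step where both messages send `x₁` contributes `q²`.

For the converse, decode to the unique message of positive likelihood. Since at every step
one of the two messages sends the always-`ỹ` input, both messages are consistent only with the
all-`ỹ` output, which has probability `q ^ (n - k)` resp. `q ^ k` when message `0` sends `x₂`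
exactly on the first `k` slots.
-/

open scoped BigOperators

/-- A fixed-length block code over input alphabet `X`, output alphabet `Y`, with
noiseless delay-free feedback, `M` messages, block length `n`, randomized decoding
with lists of size at most `L` and an erasure option (`none`). -/
structure FBCode (X Y : Type) [Fintype X] [Fintype Y] (M n L : ℕ) where
  enc : Fin M → (t : Fin n) → (Fin t.1 → Y) → X
  dec : (Fin n → Y) → Option (Finset (Fin M)) → ℝ
  dec_nonneg : ∀ y o, 0 ≤ dec y o
  dec_sum : ∀ y, ∑ o : Option (Finset (Fin M)), dec y o = 1
  dec_size : ∀ y S, dec y (some S) ≠ 0 → S.card ≤ L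

namespace FBCode

variable {X Y : Type} [Fintype X] [Fintype Y]

/-- Probability of observing output sequence `y` when message `m` is sent over the DMC `W`. -/
noncomputable def outProb (W : X → Y → ℝ) {M n L : ℕ} (c : FBCode X Y M n L)
    (m : Fin M) (y : Fin n → Y) : ℝ :=
  ∏ t : Fin n, W (c.enc m t (fun i => y ⟨i.1, lt_trans i.2 t.2⟩)) (y t)

/-- Erasure probability of the code, uniform prior on messages. -/
noncomputable def Pera (W : X → Y → ℝ) {M n L : ℕ} (c : FBCode X Y M n L) : ℝ :=
  (M : ℝ)⁻¹ * ∑ m : Fin M, ∑ y : Fin n → Y, outProb W c m y * c.dec y none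

/-- (Undetected) error probability of the code, uniform prior on messages. -/
noncomputable def Perr (W : X → Y → ℝ) {M n L : ℕ} (c : FBCode X Y M n L) : ℝ :=
  (M : ℝ)⁻¹ * ∑ m : Fin M, ∑ y : Fin n → Y,
    outProb W c m y * ∑ S : Finset (Fin M), if m ∈ S then 0 else c.dec y (some S)

end FBCode

/-- Minimum error probability of length-`n` feedback codes with `M` equiprobable
messages, list size `L`, erasure probability at most `p`. -/
noncomputable def PeMin {X Y : Type} [Fintype X] [Fintype Y] (W : X → Y → ℝ)
    (M n L : ℕ) (p : ℝ) : ℝ :=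
  sInf {e | ∃ c : FBCode X Y M n L, FBCode.Pera W c ≤ p ∧ FBCode.Perr W c = e}

/-- Minimum erasure probability of length-`n` error-free feedback codes with `M`
equiprobable messages and list size `L`. -/
noncomputable def PeraMin {X Y : Type} [Fintype X] [Fintype Y] (W : X → Y → ℝ)
    (M n L : ℕ) : ℝ :=
  sInf {r | ∃ c : FBCode X Y M n L, FBCode.Perr W c = 0 ∧ FBCode.Pera W c = r}

theorem pow_le_sum_prod_of_le_sum {Y : Type*} [Fintype Y] {c : ℝ} (hc : 0 ≤ c) {n : ℕ}
    (w : (t : Fin n) → (Fin t.1 → Y) → Y → ℝ) (hw : ∀ t h b, 0 ≤ w t h b)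
    (hsum : ∀ t h, c ≤ ∑ b, w t h b) :
    c ^ n ≤ ∑ y : Fin n → Y, ∏ t, w t (fun i => y ⟨i.1, lt_trans i.2 t.2⟩) (y t) := by
  induction n with
  | zero => simp
  | succ n ih =>
    have hsnoc : ∀ (y : Fin n → Y) (b : Y),
        ∏ t : Fin (n + 1),
            w t (fun i => Fin.snoc (α := fun _ => Y) y b ⟨i.1, lt_trans i.2 t.2⟩)
              (Fin.snoc (α := fun _ => Y) y b t) =
          (∏ t : Fin n, w t.castSucc (fun i => y ⟨i.1, lt_trans i.2 t.2⟩) (y t)) *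
            w (Fin.last n) y b := by
      intro y b
      rw [Fin.prod_univ_castSucc, Fin.snoc_last]
      congr 1
      · refine Finset.prod_congr rfl fun t _ => ?_
        rw [Fin.snoc_castSucc]
        congr 1
        funext i
        simp [Fin.snoc, i.2.trans t.2]
      · congr 1
        funext i
        simp [Fin.snoc]
    have hprod_nonneg : ∀ y : Fin n → Y,
        0 ≤ ∏ t : Fin n, w t.castSucc (fun i => y ⟨i.1, lt_trans i.2 t.2⟩) (y t) :=
      fun y => Finset.prod_nonneg fun t _ => hw _ _ _
    calc c ^ (n + 1) = c ^ n * c := pow_succ c n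
      _ ≤ (∑ y : Fin n → Y,
            ∏ t : Fin n, w t.castSucc (fun i => y ⟨i.1, lt_trans i.2 t.2⟩) (y t)) * c := by
        gcongr
        exact ih _ (fun t h b => hw _ _ _) (fun t h => hsum _ _)
      _ ≤ ∑ y : Fin n → Y, ∑ b,
            (∏ t : Fin n, w t.castSucc (fun i => y ⟨i.1, lt_trans i.2 t.2⟩) (y t)) *
              w (Fin.last n) y b := by
        rw [Finset.sum_mul]
        gcongr with y
        rw [← Finset.mul_sum]
        exact mul_le_mul_of_nonneg_left (hsum _ _) (hprod_nonneg y)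
      _ = _ := by
        simp_rw [← hsnoc]
        rw [Finset.sum_comm, ← Fintype.sum_prod_type', ← (Fin.snocEquiv fun _ => Y).sum_comp]
        rfl

theorem Real.sqrt_mul_le_half_add {a b : ℝ} (ha : 0 ≤ a) (hb : 0 ≤ b) :
    √(a * b) ≤ 2⁻¹ * (a + b) :=
  Real.sqrt_le_iff.2 ⟨by positivity, by nlinarith [sq_nonneg (a - b)]⟩

namespace FBCode

variable {X Y : Type} [Fintype X] [Fintype Y] {W : X → Y → ℝ} {M n L : ℕ}

theorem outProb_nonneg (hW : ∀ x y, 0 ≤ W x y) (c : FBCode X Y M n L) (m : Fin M)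
    (y : Fin n → Y) : 0 ≤ outProb W c m y :=
  Finset.prod_nonneg fun _ _ => hW _ _

theorem mem_of_Perr_eq_zero (hW : ∀ x y, 0 ≤ W x y) {c : FBCode X Y M n L}
    (hc : Perr W c = 0) {m : Fin M} {y : Fin n → Y} {S : Finset (Fin M)}
    (hm : outProb W c m y ≠ 0) (hS : c.dec y (some S) ≠ 0) : m ∈ S := by
  set wrong : Fin M → (Fin n → Y) → Finset (Fin M) → ℝ :=
    fun m y S => if m ∈ S then 0 else c.dec y (some S)
  have hwrong_nonneg : ∀ m y S, 0 ≤ wrong m y S := fun m y S => by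
    simp only [wrong]
    split_ifs
    exacts [le_rfl, c.dec_nonneg _ _]
  have hterm_nonneg : ∀ m y, 0 ≤ outProb W c m y * ∑ S, wrong m y S := fun m y =>
    mul_nonneg (outProb_nonneg hW c m y) (Finset.sum_nonneg fun S _ => hwrong_nonneg m y S)
  have hterm : outProb W c m y * ∑ S, wrong m y S = 0 := by
    have hM : (M : ℝ)⁻¹ ≠ 0 := inv_ne_zero (Nat.cast_ne_zero.2 (Fin.pos m).ne')
    have hsum := (mul_eq_zero.1 hc).resolve_left hM
    rw [Fintype.sum_eq_zero_iff_of_nonneg fun m => Fintype.sum_nonneg (hterm_nonneg m)] at hsum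
    exact congrFun ((Fintype.sum_eq_zero_iff_of_nonneg (hterm_nonneg m)).1 (congrFun hsum m)) y
  have hwrong : wrong m y S = 0 := congrFun ((Fintype.sum_eq_zero_iff_of_nonneg
    (hwrong_nonneg m y)).1 ((mul_eq_zero.1 hterm).resolve_left hm)) S
  by_contra hmS
  simp only [wrong, hmS, if_false] at hwrong
  exact hS hwrong

theorem dec_none_eq_one (hW : ∀ x y, 0 ≤ W x y) {c : FBCode X Y M n 1}
    (hc : Perr W c = 0) {m m' : Fin M} (hmm' : m ≠ m') {y : Fin n → Y}
    (hm : outProb W c m y ≠ 0) (hm' : outProb W c m' y ≠ 0) : c.dec y none = 1 := by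
  have hsome : ∀ S, c.dec y (some S) = 0 := fun S => by
    by_contra hS
    exact hmm' (Finset.card_le_one.1 (c.dec_size y S hS) m (mem_of_Perr_eq_zero hW hc hm hS)
      m' (mem_of_Perr_eq_zero hW hc hm' hS))
  simpa [Fintype.sum_option, hsome] using c.dec_sum y

theorem sum_sqrt_outProb_mul_le_Pera (hW : ∀ x y, 0 ≤ W x y) {c : FBCode X Y 2 n 1}
    (hc : Perr W c = 0) : ∑ y, √(outProb W c 0 y * outProb W c 1 y) ≤ Pera W c := by
  rw [Pera, Fin.sum_univ_two, ← Finset.sum_add_distrib, Finset.mul_sum]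
  refine Finset.sum_le_sum fun y _ => ?_
  have h0 := outProb_nonneg hW c 0 y
  have h1 := outProb_nonneg hW c 1 y
  by_cases hpos : outProb W c 0 y ≠ 0 ∧ outProb W c 1 y ≠ 0
  · rw [dec_none_eq_one hW hc (by decide) hpos.1 hpos.2, mul_one, mul_one, Nat.cast_two]
    exact Real.sqrt_mul_le_half_add h0 h1
  · rw [not_and_or, not_ne_iff, not_ne_iff, ← mul_eq_zero] at hpos
    rw [hpos, Real.sqrt_zero]
    have hd := c.dec_nonneg y none
    positivity

theorem pow_le_Pera_of_le_sum_sqrt (hW : ∀ x y, 0 ≤ W x y) {β : ℝ} (hβ : 0 ≤ β)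
    (hbhat : ∀ x x', β ≤ ∑ b, √(W x b * W x' b)) {c : FBCode X Y 2 n 1}
    (hc : Perr W c = 0) : β ^ n ≤ Pera W c := by
  refine le_trans ?_ (sum_sqrt_outProb_mul_le_Pera hW hc)
  simp_rw [outProb, ← Finset.prod_mul_distrib]
  rw [Finset.sum_congr rfl fun y _ =>
    Real.sqrt_prod _ fun t _ => mul_nonneg (hW _ (y t)) (hW _ (y t))]
  exact pow_le_sum_prod_of_le_sum hβ _ (fun _ _ _ => Real.sqrt_nonneg _)
    fun t h => hbhat (c.enc 0 t h) (c.enc 1 t h)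

noncomputable def consistentList (P : Fin M → (Fin n → Y) → ℝ) (L : ℕ) (y : Fin n → Y) :
    Option (Finset (Fin M)) :=
  let S := Finset.univ.filter fun m => P m y ≠ 0
  if S.card ≤ L then some S else none

noncomputable def consistentCode (W : X → Y → ℝ) (L : ℕ)
    (enc : Fin M → (t : Fin n) → (Fin t.1 → Y) → X) : FBCode X Y M n L where
  enc := enc
  dec y o := if o = consistentList
    (fun m y => ∏ t : Fin n, W (enc m t fun i => y ⟨i.1, lt_trans i.2 t.2⟩) (y t)) L y
    then 1 else 0
  dec_nonneg y o := by positivity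
  dec_sum y := by simp
  dec_size y S h := by
    simp only [ne_eq, ite_eq_right_iff, one_ne_zero, imp_false, not_not, consistentList] at h
    split_ifs at h with hS
    exact (Option.some.inj h) ▸ hS

variable {enc : Fin M → (t : Fin n) → (Fin t.1 → Y) → X}

theorem consistentCode_dec (y : Fin n → Y) (o : Option (Finset (Fin M))) :
    (consistentCode W L enc).dec y o =
      if o = consistentList (outProb W (consistentCode W L enc)) L y then 1 else 0 :=
  rfl

theorem Perr_consistentCode : Perr W (consistentCode W L enc) = 0 := by
  refine mul_eq_zero_of_right _ (Finset.sum_eq_zero fun m _ => Finset.sum_eq_zero fun y _ => ?_)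
  refine mul_eq_zero_of_ne_zero_imp_eq_zero fun hm => Finset.sum_eq_zero fun S _ => ?_
  split_ifs with hmS
  · rfl
  rw [consistentCode_dec, if_neg]
  simp only [consistentList]
  split_ifs
  · simp only [Option.some.injEq]
    rintro rfl
    exact hmS (Finset.mem_filter.2 ⟨Finset.mem_univ m, hm⟩)
  · simp

theorem outProb_ne_zero_of_consistentCode_dec_none
    {enc : Fin 2 → (t : Fin n) → (Fin t.1 → Y) → X} {y : Fin n → Y}
    (h : (consistentCode W 1 enc).dec y none ≠ 0) (m : Fin 2) :
    outProb W (consistentCode W 1 enc) m y ≠ 0 := by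
  set S := Finset.univ.filter fun m => outProb W (consistentCode W 1 enc) m y ≠ 0
  have hS : 1 < S.card := by
    by_contra! hle
    simp [consistentCode_dec, consistentList, S, hle] at h
  have hSuniv : S = Finset.univ := Finset.eq_univ_of_card S
    (le_antisymm (Finset.card_le_univ S) (by simpa [Nat.lt_iff_add_one_le] using hS))
  have hm : m ∈ S := hSuniv ▸ Finset.mem_univ m
  exact (Finset.mem_filter.1 hm).2

end FBCode

open FBCode

def zChannel (q : ℝ) : Bool → Bool → ℝ := fun x y =>
  if x then (if y then 1 else 0) else (if y then q else 1 - q)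

section ZChannel

variable {q : ℝ}

theorem zChannel_nonneg (hq0 : 0 ≤ q) (hq1 : q ≤ 1) (x y : Bool) : 0 ≤ zChannel q x y := by
  cases x <;> cases y <;> simp [zChannel] <;> linarith

theorem sqrt_le_sum_sqrt_zChannel_mul (hq0 : 0 ≤ q) (hq1 : q ≤ 1) (x x' : Bool) :
    √q ≤ ∑ b, √(zChannel q x b * zChannel q x' b) := by
  have hsq : √q ≤ 1 := Real.sqrt_le_one.2 hq1
  cases x <;> cases x' <;>
    simp [zChannel, Real.sqrt_mul_self hq0, Real.sqrt_mul_self (sub_nonneg.2 hq1)] <;> linarith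

theorem eq_true_of_outProb_zChannel_ne_zero {n L : ℕ} {c : FBCode Bool Bool 2 n L}
    {m : Fin 2} {y : Fin n → Bool} (hm : outProb (zChannel q) c m y ≠ 0) (t : Fin n)
    (ht : c.enc m t (fun i => y ⟨i.1, lt_trans i.2 t.2⟩) = true) : y t = true := by
  by_contra hyt
  exact hm (Finset.prod_eq_zero (Finset.mem_univ t) (by simp [ht, zChannel, hyt]))

noncomputable def splitCode (q : ℝ) (n k : ℕ) : FBCode Bool Bool 2 n 1 :=
  consistentCode (zChannel q) 1 fun m t _ => decide ((t.1 < k) ↔ m = 0)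

variable {n k : ℕ}

theorem outProb_splitCode_const_true (hk : k ≤ n) :
    outProb (zChannel q) (splitCode q n k) 0 (fun _ => true) = q ^ (n - k) ∧
      outProb (zChannel q) (splitCode q n k) 1 (fun _ => true) = q ^ k := by
  obtain ⟨d, rfl⟩ := Nat.exists_eq_add_of_le hk
  have hsplit (a b : ℝ) : ∏ t : Fin (k + d), (if t.1 < k then a else b) = a ^ k * b ^ d := by
    rw [Fin.prod_univ_eq_prod_range (fun i => if i < k then a else b), Finset.prod_range_add]
    simp [Finset.prod_ite_of_true]
  have hsplit' (a b : ℝ) : ∏ t : Fin (k + d), (if k ≤ t.1 then a else b) = b ^ k * a ^ d := by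
    simpa only [← not_lt, ite_not] using hsplit b a
  simp [outProb, splitCode, consistentCode, zChannel, hsplit, hsplit']

theorem eq_true_of_outProb_splitCode_ne_zero {y : Fin n → Bool}
    (h0 : outProb (zChannel q) (splitCode q n k) 0 y ≠ 0)
    (h1 : outProb (zChannel q) (splitCode q n k) 1 y ≠ 0) : y = fun _ => true := by
  funext t
  by_cases ht : t.1 < k
  · exact eq_true_of_outProb_zChannel_ne_zero h0 t (by simp [splitCode, consistentCode, ht])
  · exact eq_true_of_outProb_zChannel_ne_zero h1 t (by simp [splitCode, consistentCode, ht])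

theorem sum_outProb_splitCode_dec_none_le (hq0 : 0 ≤ q) (hq1 : q ≤ 1) (m : Fin 2) :
    ∑ y, outProb (zChannel q) (splitCode q n k) m y * (splitCode q n k).dec y none ≤
      outProb (zChannel q) (splitCode q n k) m (fun _ => true) := by
  rw [Finset.sum_eq_single_of_mem (fun _ => true) (Finset.mem_univ _)]
  · refine mul_le_of_le_one_right (outProb_nonneg (zChannel_nonneg hq0 hq1) _ _ _) ?_
    rw [splitCode, consistentCode_dec]
    split_ifs <;> norm_num
  · intro y _ hy
    refine mul_eq_zero_of_right _ (not_not.1 fun hd => hy ?_)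
    exact eq_true_of_outProb_splitCode_ne_zero
      (outProb_ne_zero_of_consistentCode_dec_none hd 0)
      (outProb_ne_zero_of_consistentCode_dec_none hd 1)

theorem Pera_splitCode_le (hq0 : 0 ≤ q) (hq1 : q ≤ 1) (hk : 2 * k ≤ n) :
    Pera (zChannel q) (splitCode q n k) ≤ q ^ k := by
  obtain ⟨h0, h1⟩ := outProb_splitCode_const_true (q := q) (show k ≤ n by omega)
  have hqk : q ^ (n - k) ≤ q ^ k := pow_le_pow_of_le_one hq0 hq1 (by omega)
  calc Pera (zChannel q) (splitCode q n k)
      ≤ 2⁻¹ * (outProb (zChannel q) (splitCode q n k) 0 (fun _ => true) +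
          outProb (zChannel q) (splitCode q n k) 1 (fun _ => true)) := by
        rw [Pera, Fin.sum_univ_two, Nat.cast_two]
        gcongr <;> exact sum_outProb_splitCode_dec_none_le hq0 hq1 _
    _ ≤ q ^ k := by rw [h0, h1]; linarith

end ZChannel

/-- for the Z-channel with crossover `q` (inputs `false = x₁`,
`true = x₂`, outputs `false = y₀`, `true = ỹ`), any length-`n` error-free
two-message feedback code has erasure probability at least `q^{n/2}`, and the
non-feedback code assigning message `0` to the always-`ỹ` input on the first
`⌊n/2⌋` slots and swapping afterwards is error free with erasure probability at
most `q^{⌊n/2⌋}`. -/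
theorem zchannel_erasure_bounds (q : ℝ) (hq0 : 0 < q) (hq1 : q < 1) (n : ℕ) :
    let W : Bool → Bool → ℝ := fun x y =>
      if x then (if y then 1 else 0) else (if y then q else 1 - q)
    (∀ c : FBCode Bool Bool 2 n 1, FBCode.Perr W c = 0 →
        Real.rpow q ((n : ℝ) / 2) ≤ FBCode.Pera W c) ∧
      (∃ c : FBCode Bool Bool 2 n 1,
        (∀ (m : Fin 2) (t : Fin n) (h : Fin t.1 → Bool),
          c.enc m t h = decide ((t.1 < n / 2) ↔ m = 0)) ∧
        FBCode.Perr W c = 0 ∧ FBCode.Pera W c ≤ q ^ (n / 2)) := by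
  intro W
  refine ⟨fun c hc => ?_, splitCode q n (n / 2), fun _ _ _ => rfl,
    Perr_consistentCode, Pera_splitCode_le hq0.le hq1.le (Nat.mul_div_le n 2)⟩
  change q ^ ((n : ℝ) / 2) ≤ _
  rw [Real.rpow_div_two_eq_sqrt _ hq0.le, Real.rpow_natCast]
  exact pow_le_Pera_of_le_sum_sqrt (zChannel_nonneg hq0.le hq1.le) (Real.sqrt_nonneg q)
    (sqrt_le_sum_sqrt_zChannel_mul hq0.le hq1.le) hc
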